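/- arXiv:2505.21690 — 6 statements merged into one kernel-verified Lean document; each statement's English description precedes it below -/
import Mathlib

section
/- Let G be a graph on m vertices with e(G) = p·C(m,2) − D where D ≥ 0 (p a real number). If v is a vertex of G with degree at most the average degree of G, then p·C(m−1,2) − e(G − v) ≤ ((m−2)/m)·D, where G − v is the induced subgraph on the remaining m−1 vertices. -/
/-- If `e(G) = p·C(m,2) − D`, `D ≥ 0`, and `v` has degree at most the average degree,
then `p·C(m−1,2) − e(G − v) ≤ ((m−2)/m)·D`. -/
theorem stmt_2 (m : ℕ) (hm : 2 ≤ m) (G : SimpleGraph (Fin m)) [DecidableRel G.Adj]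
    (p D : ℝ) (hD : 0 ≤ D)
    (hE : (G.edgeFinset.card : ℝ) = p * (m.choose 2) - D)
    (v : Fin m) (hv : (G.degree v : ℝ) ≤ 2 * (G.edgeFinset.card : ℝ) / m) :
    p * ((m - 1).choose 2) - (((G.edgeFinset.filter (fun e => v ∉ e)).card : ℝ))
      ≤ (((m : ℝ) - 2) / m) * D := by
  have hcard : (G.edgeFinset.filter (fun e => v ∈ e)).card
      + (G.edgeFinset.filter (fun e => v ∉ e)).card = G.edgeFinset.card :=
    Finset.card_filter_add_card_filter_not _
  have hdeg : (G.edgeFinset.filter (fun e => v ∈ e)).card = G.degree v := by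
    rw [← G.card_incidenceFinset_eq_degree v, G.incidenceFinset_eq_filter]
  rw [hdeg] at hcard
  have hcardR : (G.degree v : ℝ)
      + ((G.edgeFinset.filter (fun e => v ∉ e)).card : ℝ) = (G.edgeFinset.card : ℝ) := by
    exact_mod_cast congrArg (Nat.cast : ℕ → ℝ) hcard
  have hm1 : ((m - 1 : ℕ) : ℝ) = (m : ℝ) - 1 := by
    have : 1 ≤ m := by omega
    push_cast [this]; ring
  have hc1 : ((m.choose 2 : ℕ) : ℝ) = (m : ℝ) * ((m : ℝ) - 1) / 2 := by
    rw [Nat.cast_choose_two]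
  have hc2 : (((m - 1).choose 2 : ℕ) : ℝ) = ((m : ℝ) - 1) * ((m : ℝ) - 2) / 2 := by
    rw [Nat.cast_choose_two, hm1]; ring
  have hmpos : (0 : ℝ) < m := by positivity
  rw [hc1] at hE
  rw [hc2]
  rw [le_div_iff₀ hmpos] at hv
  have h1 : ((G.edgeFinset.filter (fun e => v ∉ e)).card : ℝ) * m
      ≥ (G.edgeFinset.card : ℝ) * m - 2 * (G.edgeFinset.card : ℝ) := by
    have h2 := congrArg (· * (m : ℝ)) hcardR
    simp only [add_mul] at h2
    nlinarith [hv]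
  rw [hE] at h1
  rw [div_mul_eq_mul_div, le_div_iff₀ hmpos, sub_mul]
  nlinarith [h1]
end

section
/- Let G be a graph with n vertices and exactly p·C(n,2) edges, where p ∈ [0,1] and p·C(n,2) is an integer. Then there is an ordering v_1, …, v_n of the vertices of G such that for every ℓ ∈ {1, …, n}, the number of edges induced by {v_1, …, v_ℓ} satisfies e({v_1,…,v_ℓ}) − p·C(ℓ,2) ≤ p·(n−1) and p·C(ℓ,2) − e({v_1,…,v_ℓ}) ≤ (1−p)·(n−1). -/
open Finset

namespace Stmt5Aux

variable {n : ℕ} (G : SimpleGraph (Fin n)) [DecidableRel G.Adj]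

/-- number of edges inside `S` -/
def ES (S : Finset (Fin n)) : ℕ := (G.edgeFinset ∩ S.sym2).card

/-- number of neighbours of `v` inside `S` -/
def dS (S : Finset (Fin n)) (v : Fin n) : ℕ := (S.filter (G.Adj v)).card

lemma dS_erase (S : Finset (Fin n)) (v : Fin n) : dS G (S.erase v) v = dS G S v := by
  unfold dS
  congr 1
  ext w
  simp only [mem_filter, mem_erase]
  constructor
  · rintro ⟨⟨-, hw⟩, ha⟩; exact ⟨hw, ha⟩
  · rintro ⟨hw, ha⟩; exact ⟨⟨fun h => (G.ne_of_adj ha).symm h, hw⟩, ha⟩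

lemma dS_le (S : Finset (Fin n)) (v : Fin n) (hv : v ∈ S) : dS G S v ≤ S.card - 1 := by
  have h : S.filter (G.Adj v) ⊆ S.erase v := by
    intro w hw
    simp only [mem_filter] at hw
    exact mem_erase.2 ⟨fun h => G.ne_of_adj hw.2 h.symm, hw.1⟩
  calc dS G S v ≤ (S.erase v).card := card_le_card h
    _ = S.card - 1 := card_erase_of_mem hv

lemma ES_erase (S : Finset (Fin n)) (v : Fin n) (hv : v ∈ S) :
    ES G S = ES G (S.erase v) + dS G S v := by
  classical
  unfold ES
  have hsplit := Finset.card_filter_add_card_filter_not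
    (p := fun e => v ∈ e) (s := G.edgeFinset ∩ S.sym2)
  have h2 : (G.edgeFinset ∩ S.sym2).filter (fun e => ¬ v ∈ e)
      = G.edgeFinset ∩ (S.erase v).sym2 := by
    ext e
    induction e using Sym2.ind with
    | _ x y =>
      simp only [mem_filter, mem_inter, mk_mem_sym2_iff, mem_erase, Sym2.mem_iff]
      constructor
      · rintro ⟨⟨he, hx, hy⟩, hne⟩
        push_neg at hne
        exact ⟨he, ⟨fun h => hne.1 h.symm, hx⟩, ⟨fun h => hne.2 h.symm, hy⟩⟩
      · rintro ⟨he, ⟨hx1, hx2⟩, ⟨hy1, hy2⟩⟩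
        refine ⟨⟨he, hx2, hy2⟩, ?_⟩
        push_neg
        exact ⟨fun h => hx1 h.symm, fun h => hy1 h.symm⟩
  have h1 : ((G.edgeFinset ∩ S.sym2).filter (fun e => v ∈ e)).card = dS G S v := by
    unfold dS
    rw [eq_comm]
    refine Finset.card_bij (fun w _ => s(v, w)) ?_ ?_ ?_
    · intro w hw
      simp only [mem_filter] at hw
      simp only [mem_filter, mem_inter, SimpleGraph.mem_edgeFinset, mk_mem_sym2_iff,
        Sym2.mem_iff]
      exact ⟨⟨hw.2, hv, hw.1⟩, by simp⟩
    · intro a ha b hb h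
      exact Sym2.congr_right.mp h
    · intro e he
      simp only [mem_filter, mem_inter, SimpleGraph.mem_edgeFinset] at he
      obtain ⟨⟨hadj, hmem⟩, hve⟩ := he
      induction e using Sym2.ind with
      | _ x y =>
        rw [mk_mem_sym2_iff] at hmem
        rw [Sym2.mem_iff] at hve
        rw [SimpleGraph.mem_edgeSet] at hadj
        rcases hve with rfl | rfl
        · exact ⟨y, mem_filter.2 ⟨hmem.2, hadj⟩, rfl⟩
        · exact ⟨x, mem_filter.2 ⟨hmem.1, hadj.symm⟩, Sym2.eq_swap⟩
  rw [h1, h2] at hsplit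
  omega

lemma sum_dS (S : Finset (Fin n)) : ∑ v ∈ S, dS G S v = 2 * ES G S := by
  classical
  induction S using Finset.induction_on with
  | empty => simp [dS, ES]
  | @insert a s ha ih =>
    have hins : ES G (insert a s) = ES G s + dS G (insert a s) a := by
      have h := ES_erase G (insert a s) a (mem_insert_self a s)
      rwa [erase_insert ha] at h
    have hda : dS G (insert a s) a = dS G s a := by
      unfold dS
      rw [filter_insert, if_neg (G.irrefl)]
    have hdv : ∀ v ∈ s, dS G (insert a s) v = dS G s v + (if G.Adj v a then 1 else 0) := by
      intro v hv
      unfold dS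
      rw [filter_insert]
      split_ifs with h
      · rw [card_insert_of_notMem (fun hc => ha (mem_filter.1 hc).1)]
      · simp
    have hsum : ∑ v ∈ s, (if G.Adj v a then 1 else 0) = dS G s a := by
      rw [← Finset.card_filter]
      unfold dS
      congr 1
      ext w
      simp [G.adj_comm]
    rw [Finset.sum_insert ha, Finset.sum_congr rfl hdv, Finset.sum_add_distrib, hda, hins,
      hsum, ih]
    omega

lemma two_mul_choose_two (m : ℕ) : 2 * (m + 1).choose 2 = (m + 1) * m := by
  obtain ⟨k, hk⟩ := Nat.even_mul_succ_self m
  rw [Nat.choose_two_right, Nat.add_sub_cancel, mul_comm (m+1) m]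
  omega

lemma step_exists (p : ℝ) (hp0 : 0 ≤ p) (hp1 : p ≤ 1) (S : Finset (Fin n))
    (hS : S.Nonempty) (hc : S.card ≤ n)
    (h1 : (ES G S : ℝ) - p * (S.card.choose 2) ≤ p * ((n : ℝ) - 1))
    (h2 : p * (S.card.choose 2) - (ES G S : ℝ) ≤ (1 - p) * ((n : ℝ) - 1)) :
    ∃ v ∈ S,
      ((ES G (S.erase v) : ℝ) - p * ((S.card - 1).choose 2) ≤ p * ((n : ℝ) - 1)) ∧
      (p * ((S.card - 1).choose 2) - (ES G (S.erase v) : ℝ) ≤ (1 - p) * ((n : ℝ) - 1)) := by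
  obtain ⟨m, hm⟩ : ∃ m, S.card = m + 1 := by
    have := card_pos.2 hS
    exact ⟨S.card - 1, by omega⟩
  rw [hm] at h1 h2 hc ⊢
  rw [Nat.add_sub_cancel]
  have hmn : (m : ℝ) ≤ (n : ℝ) - 1 := by
    have : (m : ℝ) + 1 ≤ n := by exact_mod_cast hc
    linarith
  have hcc : (((m + 1).choose 2 : ℕ) : ℝ) = ((m.choose 2 : ℕ) : ℝ) + m := by
    rw [Nat.choose_succ_succ m 1, Nat.choose_one_right]
    push_cast
    ring
  have hpc : p * (((m + 1).choose 2 : ℕ) : ℝ)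
      = p * ((m.choose 2 : ℕ) : ℝ) + p * m := by rw [hcc]; ring
  have hAB : 2 * (((m + 1).choose 2 : ℕ) : ℝ) = ((m : ℝ) + 1) * m := by
    have := two_mul_choose_two m
    exact_mod_cast this
  have hmpos : (0 : ℝ) < (m : ℝ) + 1 := by positivity
  by_cases hf : 0 ≤ (ES G S : ℝ) - p * (((m + 1).choose 2 : ℕ) : ℝ)
  · -- remove a vertex of maximal degree
    obtain ⟨v, hvS, hv⟩ : ∃ v ∈ S, 2 * ES G S ≤ S.card * dS G S v := by
      apply Finset.exists_le_of_sum_le hS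
      refine le_of_eq ?_
      calc ∑ _v ∈ S, 2 * ES G S = S.card * (2 * ES G S) := by
            rw [Finset.sum_const, smul_eq_mul]
        _ = S.card * ∑ v ∈ S, dS G S v := by rw [sum_dS]
        _ = ∑ v ∈ S, S.card * dS G S v := by rw [Finset.mul_sum]
    have hE' : (ES G (S.erase v) : ℝ) = (ES G S : ℝ) - dS G S v := by
      rw [ES_erase G S v hvS]
      push_cast
      ring
    have hdle : (dS G S v : ℝ) ≤ m := by
      have := dS_le G S v hvS
      rw [hm, Nat.add_sub_cancel] at this
      exact_mod_cast this
    have hvcast : 2 * (ES G S : ℝ) ≤ ((m : ℝ) + 1) * (dS G S v) := by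
      rw [hm] at hv
      exact_mod_cast hv
    have hd : p * m ≤ (dS G S v : ℝ) := by
      have h' : ((m : ℝ) + 1) * (p * m) ≤ ((m : ℝ) + 1) * (dS G S v) := by
        nlinarith [hvcast, hf, hAB]
      exact le_of_mul_le_mul_left h' hmpos
    refine ⟨v, hvS, ?_, ?_⟩
    · rw [hE']
      linarith [h1, hd, hpc]
    · rw [hE']
      have hfin : (1 - p) * (m : ℝ) ≤ (1 - p) * ((n : ℝ) - 1) :=
        mul_le_mul_of_nonneg_left hmn (by linarith)
      nlinarith [hf, hpc, hdle, hfin]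
  · -- remove a vertex of minimal degree
    push_neg at hf
    obtain ⟨v, hvS, hv⟩ : ∃ v ∈ S, S.card * dS G S v ≤ 2 * ES G S := by
      apply Finset.exists_le_of_sum_le hS
      refine le_of_eq ?_
      calc ∑ v ∈ S, S.card * dS G S v = S.card * ∑ v ∈ S, dS G S v := by
            rw [Finset.mul_sum]
        _ = S.card * (2 * ES G S) := by rw [sum_dS]
        _ = ∑ _v ∈ S, 2 * ES G S := by rw [Finset.sum_const, smul_eq_mul]
    have hE' : (ES G (S.erase v) : ℝ) = (ES G S : ℝ) - dS G S v := by
      rw [ES_erase G S v hvS]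
      push_cast
      ring
    have hvcast : ((m : ℝ) + 1) * (dS G S v) ≤ 2 * (ES G S : ℝ) := by
      rw [hm] at hv
      exact_mod_cast hv
    have hd : (dS G S v : ℝ) ≤ p * m := by
      have h' : ((m : ℝ) + 1) * (dS G S v) ≤ ((m : ℝ) + 1) * (p * m) := by
        nlinarith [hvcast, hf.le, hAB]
      exact le_of_mul_le_mul_left h' hmpos
    have hd0 : (0 : ℝ) ≤ (dS G S v : ℝ) := by positivity
    have hpn : p * (m : ℝ) ≤ p * ((n : ℝ) - 1) := mul_le_mul_of_nonneg_left hmn hp0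
    refine ⟨v, hvS, ?_, ?_⟩
    · rw [hE']
      linarith [hf.le, hpc, hd0, hpn]
    · rw [hE']
      linarith [h2, hpc, hd]

open Classical in
noncomputable def chain (p : ℝ) : ℕ → Finset (Fin n)
  | 0 => Finset.univ
  | (k + 1) =>
    let S := chain p k
    if h : ∃ v ∈ S,
        ((ES G (S.erase v) : ℝ) - p * ((S.card - 1).choose 2) ≤ p * ((n : ℝ) - 1)) ∧
        (p * ((S.card - 1).choose 2) - (ES G (S.erase v) : ℝ) ≤ (1 - p) * ((n : ℝ) - 1))
    then S.erase h.choose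
    else S

lemma chain_succ_subset (p : ℝ) (k : ℕ) : chain G p (k + 1) ⊆ chain G p k := by
  rw [chain]
  split_ifs with h
  · exact erase_subset _ _
  · exact Finset.Subset.rfl

lemma chain_anti (p : ℝ) {k k' : ℕ} (h : k ≤ k') : chain G p k' ⊆ chain G p k := by
  induction k' with
  | zero => simp_all
  | succ j ih =>
    rcases Nat.eq_or_lt_of_le h with rfl | h'
    · exact Finset.Subset.rfl
    · exact (chain_succ_subset G p j).trans (ih (by omega))

lemma chain_spec (p : ℝ) (hp0 : 0 ≤ p) (hp1 : p ≤ 1)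
    (hE : (G.edgeFinset.card : ℝ) = p * (n.choose 2)) (hn : 1 ≤ n) :
    ∀ k, k ≤ n → (chain G p k).card = n - k ∧
      ((ES G (chain G p k) : ℝ) - p * ((chain G p k).card.choose 2) ≤ p * ((n : ℝ) - 1)) ∧
      (p * ((chain G p k).card.choose 2) - (ES G (chain G p k) : ℝ)
        ≤ (1 - p) * ((n : ℝ) - 1)) := by
  intro k
  induction k with
  | zero =>
    intro _
    have hcard : (chain G p 0).card = n := by
      rw [chain]
      simp
    have hES : ES G (chain G p 0) = G.edgeFinset.card := by
      rw [chain]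
      unfold ES
      congr 1
      refine inter_eq_left.2 (fun e he => mem_sym2_iff.2 (fun a _ => mem_univ a))
    have hn1 : (0 : ℝ) ≤ (n : ℝ) - 1 := by
      have : (1 : ℝ) ≤ n := by exact_mod_cast hn
      linarith
    refine ⟨by simpa using hcard, ?_, ?_⟩
    · rw [hES, hcard, hE]
      simp only [sub_self]
      exact mul_nonneg hp0 hn1
    · rw [hES, hcard, hE]
      simp only [sub_self]
      exact mul_nonneg (by linarith) hn1
  | succ k ih =>
    intro hk
    obtain ⟨hcard, hb1, hb2⟩ := ih (by omega)
    have hne : (chain G p k).Nonempty := card_pos.1 (by omega)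
    have hcn : (chain G p k).card ≤ n := by omega
    have hex := step_exists G p hp0 hp1 _ hne hcn hb1 hb2
    have hchain : chain G p (k + 1) = (chain G p k).erase hex.choose := by
      rw [chain]
      exact dif_pos hex
    have hvmem := hex.choose_spec.1
    have hcard' : (chain G p (k + 1)).card = n - (k + 1) := by
      rw [hchain, card_erase_of_mem hvmem]
      omega
    refine ⟨hcard', ?_, ?_⟩
    · rw [hchain, card_erase_of_mem hvmem]
      exact hex.choose_spec.2.1
    · rw [hchain, card_erase_of_mem hvmem]
      exact hex.choose_spec.2.2

end Stmt5Aux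

/-- For a graph with `n` vertices and `p·C(n,2)` edges there is an ordering of the vertices
whose every prefix `{v_1,…,v_ℓ}` satisfies `e − p·C(ℓ,2) ≤ p·(n−1)` and
`p·C(ℓ,2) − e ≤ (1−p)·(n−1)`. -/
theorem stmt_5 (n : ℕ) (G : SimpleGraph (Fin n)) [DecidableRel G.Adj]
    (p : ℝ) (hp0 : 0 ≤ p) (hp1 : p ≤ 1)
    (hE : (G.edgeFinset.card : ℝ) = p * (n.choose 2)) :
    ∃ σ : Equiv.Perm (Fin n), ∀ ℓ : ℕ, 1 ≤ ℓ → ℓ ≤ n →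
      ((((G.edgeFinset ∩ ((Finset.univ.filter (fun i : Fin n => (i : ℕ) < ℓ)).image σ).sym2).card : ℝ)
          - p * (ℓ.choose 2)) ≤ p * ((n : ℝ) - 1)) ∧
      ((p * (ℓ.choose 2)
          - ((G.edgeFinset ∩ ((Finset.univ.filter (fun i : Fin n => (i : ℕ) < ℓ)).image σ).sym2).card : ℝ))
          ≤ (1 - p) * ((n : ℝ) - 1)) := by
  classical
  open Stmt5Aux Finset in
  rcases Nat.eq_zero_or_pos n with rfl | hn
  · exact ⟨Equiv.refl _, fun ℓ h1 h2 => by omega⟩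
  · have spec := Stmt5Aux.chain_spec G p hp0 hp1 hE hn
    have hdiff : ∀ i : Fin n, ∃ v, v ∈ Stmt5Aux.chain G p (n - ((i : ℕ) + 1)) ∧
        v ∉ Stmt5Aux.chain G p (n - (i : ℕ)) := by
      intro i
      have hsub : Stmt5Aux.chain G p (n - (i : ℕ)) ⊆ Stmt5Aux.chain G p (n - ((i : ℕ) + 1)) :=
        Stmt5Aux.chain_anti G p (by omega)
      have hc1 : (Stmt5Aux.chain G p (n - ((i : ℕ) + 1))).card = (i : ℕ) + 1 := by
        have := (spec (n - ((i : ℕ) + 1)) (by omega)).1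
        have hi := i.isLt
        omega
      have hc2 : (Stmt5Aux.chain G p (n - (i : ℕ))).card = (i : ℕ) := by
        have := (spec (n - (i : ℕ)) (by omega)).1
        have hi := i.isLt
        omega
      have hnonempty : ((Stmt5Aux.chain G p (n - ((i : ℕ) + 1)))
          \ (Stmt5Aux.chain G p (n - (i : ℕ)))).Nonempty := by
        rw [← Finset.card_pos, Finset.card_sdiff_of_subset hsub]
        omega
      obtain ⟨v, hv⟩ := hnonempty
      rw [Finset.mem_sdiff] at hv
      exact ⟨v, hv.1, hv.2⟩
    choose f hf1 hf2 using hdiff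
    have key : ∀ i j : Fin n, (i : ℕ) < (j : ℕ) → f i ≠ f j := by
      intro i j hlt heq
      have hsub : Stmt5Aux.chain G p (n - ((i : ℕ) + 1)) ⊆ Stmt5Aux.chain G p (n - (j : ℕ)) :=
        Stmt5Aux.chain_anti G p (by omega)
      exact hf2 j (heq ▸ hsub (hf1 i))
    have hinj : Function.Injective f := by
      intro i j hij
      by_contra hne
      have hne' : (i : ℕ) ≠ (j : ℕ) := fun h => hne (Fin.ext h)
      rcases hne'.lt_or_gt with h | h
      · exact key i j h hij
      · exact key j i h hij.symm
    refine ⟨Equiv.ofBijective f (Finite.injective_iff_bijective.1 hinj), ?_⟩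
    intro ℓ hℓ1 hℓn
    have hcℓ : (Stmt5Aux.chain G p (n - ℓ)).card = ℓ := by
      have := (spec (n - ℓ) (by omega)).1
      omega
    have hfc : (Finset.univ.filter (fun i : Fin n => (i : ℕ) < ℓ)).card = ℓ := by
      refine Eq.trans (b := (Finset.range ℓ).card) ?_ (Finset.card_range ℓ)
      refine Finset.card_bij' (fun (a : Fin n) _ => (a : ℕ))
        (fun b hb => (⟨b, lt_of_lt_of_le (Finset.mem_range.1 hb) hℓn⟩ : Fin n)) ?_ ?_ ?_ ?_
      · intro a ha
        simp only [Finset.mem_filter] at ha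
        exact Finset.mem_range.2 ha.2
      · intro b hb
        simp [Finset.mem_range.1 hb]
      · intro a ha
        rfl
      · intro b hb
        rfl
    have himg : (Finset.univ.filter (fun i : Fin n => (i : ℕ) < ℓ)).image
        (Equiv.ofBijective f (Finite.injective_iff_bijective.1 hinj))
        = Stmt5Aux.chain G p (n - ℓ) := by
      apply Finset.eq_of_subset_of_card_le
      · intro x hx
        rw [Finset.mem_image] at hx
        obtain ⟨i, hi, rfl⟩ := hx
        rw [Finset.mem_filter] at hi
        have hsub : Stmt5Aux.chain G p (n - ((i : ℕ) + 1)) ⊆ Stmt5Aux.chain G p (n - ℓ) :=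
          Stmt5Aux.chain_anti G p (by omega)
        exact hsub (hf1 i)
      · rw [Finset.card_image_of_injective _
          (Equiv.ofBijective f (Finite.injective_iff_bijective.1 hinj)).injective, hfc, hcℓ]
    obtain ⟨hc, hb1, hb2⟩ := spec (n - ℓ) (by omega)
    rw [hcℓ] at hb1 hb2
    unfold Stmt5Aux.ES at hb1 hb2
    rw [himg]
    exact ⟨hb1, hb2⟩
end

section
/- Let G be a graph with n vertices and p·C(n,2) edges, where p = e(G)/C(n,2). Then there is an ordering v_1, …, v_n of the vertices such that |e({v_1,…,v_ℓ}) − p·C(ℓ,2)| ≤ max{p, 1−p}·(n−1) for all ℓ ∈ {1,…,n}. -/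
/-!
Write `f(S) = e(S) - p·C(|S|,2)`, so that `f(V) = 0`. Deleting `v` from `S` lowers `f` by
`d_S(v) - p(|S| - 1)`, where `d_S(v)` is the degree of `v` in `G[S]`; by the handshake lemma these
drops sum to `2 f(S)`, and each lies in `[-p(n-1), (1-p)(n-1)]`. Hence if
`f(S) ∈ [-(1-p)(n-1), p(n-1)]`, deleting a vertex whose drop has the sign of `f(S)` keeps `f` in
that interval. Deleting vertices greedily from `V` and reversing the order of deletion gives the
ordering.
-/

open Finset

namespace SimpleGraph

theorem edgeDensity_mem_Icc {V : Type*} [Fintype V] (G : SimpleGraph V) [DecidableRel G.Adj] :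
    (#G.edgeFinset / (Fintype.card V).choose 2 : ℝ) ∈ Set.Icc 0 1 :=
  ⟨by positivity, div_le_one_of_le₀ (by exact_mod_cast G.card_edgeFinset_le_card_choose_two)
    (by positivity)⟩

variable {V : Type*} [DecidableEq V] [Fintype V] (G : SimpleGraph V) [DecidableRel G.Adj]

def inducedEdgeFinset (s : Finset V) : Finset (Sym2 V) := G.edgeFinset ∩ s.sym2

def inducedDegree (s : Finset V) (v : V) : ℕ := #{e ∈ G.inducedEdgeFinset s | v ∈ e}

def edgeDiscrepancy (p : ℝ) (s : Finset V) : ℝ := #(G.inducedEdgeFinset s) - p * (#s).choose 2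

variable {G}

theorem inducedEdgeFinset_erase (s : Finset V) (v : V) :
    G.inducedEdgeFinset (s.erase v) = {e ∈ G.inducedEdgeFinset s | v ∉ e} := by
  ext e
  induction e using Sym2.ind with
  | _ a b =>
    simp only [inducedEdgeFinset, mem_filter, mem_inter, mk_mem_sym2_iff, mem_erase, Sym2.mem_iff]
    tauto

theorem card_inducedEdgeFinset_erase_add_inducedDegree (s : Finset V) (v : V) :
    #(G.inducedEdgeFinset (s.erase v)) + G.inducedDegree s v = #(G.inducedEdgeFinset s) := by
  rw [inducedEdgeFinset_erase, inducedDegree, add_comm]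
  exact card_filter_add_card_filter_not _

theorem sum_inducedDegree (s : Finset V) :
    ∑ v ∈ s, G.inducedDegree s v = 2 * #(G.inducedEdgeFinset s) := by
  have hends : ∀ e ∈ G.inducedEdgeFinset s, #{v ∈ s | v ∈ e} = 2 := by
    intro e he
    obtain ⟨hG, hs⟩ := mem_inter.mp he
    have : {v ∈ s | v ∈ e} = e.toFinset := by
      ext v
      rw [mem_filter, Sym2.mem_toFinset, and_iff_right_iff_imp]
      exact mem_sym2_iff.mp hs v
    rw [this, Sym2.card_toFinset_of_not_isDiag _
      (G.not_isDiag_of_mem_edgeSet (mem_edgeFinset.mp hG))]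
  calc ∑ v ∈ s, G.inducedDegree s v
      = ∑ e ∈ G.inducedEdgeFinset s, #{v ∈ s | v ∈ e} :=
        sum_card_bipartiteAbove_eq_sum_card_bipartiteBelow (· ∈ ·)
    _ = 2 * #(G.inducedEdgeFinset s) := by
        rw [sum_congr rfl hends, sum_const, smul_eq_mul, mul_comm]

theorem inducedDegree_le {s : Finset V} {v : V} (hv : v ∈ s) :
    G.inducedDegree s v ≤ #s - 1 := by
  have : {e ∈ G.inducedEdgeFinset s | v ∈ e} ⊆ (s.erase v).image (fun w => s(v, w)) := by
    intro e he
    induction e using Sym2.ind with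
    | _ a b =>
      simp only [inducedEdgeFinset, mem_filter, mem_inter, mk_mem_sym2_iff, mem_edgeFinset,
        mem_edgeSet, Sym2.mem_iff] at he
      obtain ⟨⟨hab, ha, hb⟩, rfl | rfl⟩ := he
      · exact mem_image.mpr ⟨b, mem_erase.mpr ⟨hab.ne.symm, hb⟩, rfl⟩
      · exact mem_image.mpr ⟨a, mem_erase.mpr ⟨hab.ne, ha⟩, Sym2.eq_swap⟩
  calc G.inducedDegree s v ≤ #((s.erase v).image (fun w => s(v, w))) := card_le_card this
    _ ≤ #(s.erase v) := card_image_le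
    _ = #s - 1 := card_erase_of_mem hv

theorem edgeDiscrepancy_univ_edgeDensity :
    G.edgeDiscrepancy (#G.edgeFinset / (Fintype.card V).choose 2) univ = 0 := by
  rw [edgeDiscrepancy, inducedEdgeFinset, sym2_univ, inter_univ, card_univ,
    div_mul_cancel_of_imp fun h => ?_, sub_self]
  exact_mod_cast Nat.eq_zero_of_le_zero
    (G.card_edgeFinset_le_card_choose_two.trans (by exact_mod_cast h.le))

theorem edgeDiscrepancy_erase (p : ℝ) {s : Finset V} {v : V} (hv : v ∈ s) :
    G.edgeDiscrepancy p (s.erase v) =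
      G.edgeDiscrepancy p s - (G.inducedDegree s v - p * (#s - 1)) := by
  obtain ⟨k, hk⟩ := Nat.exists_eq_add_one.mpr (card_pos.mpr ⟨v, hv⟩)
  rw [edgeDiscrepancy, edgeDiscrepancy, ← card_inducedEdgeFinset_erase_add_inducedDegree s v,
    card_erase_of_mem hv, hk, Nat.add_sub_cancel, Nat.choose_succ_succ', Nat.choose_one_right]
  push_cast
  ring

theorem sum_inducedDegree_sub (p : ℝ) (s : Finset V) :
    ∑ v ∈ s, ((G.inducedDegree s v : ℝ) - p * (#s - 1)) = 2 * G.edgeDiscrepancy p s := by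
  rw [sum_sub_distrib, ← Nat.cast_sum, sum_inducedDegree, sum_const, nsmul_eq_mul,
    edgeDiscrepancy, Nat.cast_choose_two]
  push_cast
  ring

theorem exists_edgeDiscrepancy_erase_mem_Icc {p c : ℝ} (hp₀ : 0 ≤ p) (hp₁ : p ≤ 1)
    {s : Finset V} (hs : s.Nonempty) (hc : (#s : ℝ) - 1 ≤ c)
    (h : G.edgeDiscrepancy p s ∈ Set.Icc (-((1 - p) * c)) (p * c)) :
    ∃ v ∈ s, G.edgeDiscrepancy p (s.erase v) ∈ Set.Icc (-((1 - p) * c)) (p * c) := by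
  set d : V → ℝ := fun v => G.inducedDegree s v - p * (#s - 1)
  have hd : ∀ v ∈ s, -(p * c) ≤ d v ∧ d v ≤ (1 - p) * c := by
    intro v hv
    have hdeg : (G.inducedDegree s v : ℝ) + 1 ≤ #s := by
      have := inducedDegree_le (G := G) hv
      have := card_pos.mpr hs
      exact_mod_cast (by omega : G.inducedDegree s v + 1 ≤ #s)
    constructor
    · nlinarith [(G.inducedDegree s v).cast_nonneg (α := ℝ)]
    · nlinarith
  have hsum := sum_inducedDegree_sub (G := G) p s
  have herase : ∀ v ∈ s, G.edgeDiscrepancy p (s.erase v) = G.edgeDiscrepancy p s - d v :=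
    fun v hv => edgeDiscrepancy_erase p hv
  rcases le_total 0 (G.edgeDiscrepancy p s) with h0 | h0
  · obtain ⟨v, hv, hdv⟩ := exists_le_of_sum_le hs (f := fun _ => 0) (g := d)
      (by simp [d, hsum]; linarith)
    refine ⟨v, hv, ?_⟩
    rw [herase v hv]
    constructor <;> linarith [h.1, h.2, hd v hv, hdv]
  · obtain ⟨v, hv, hdv⟩ := exists_le_of_sum_le hs (f := d) (g := fun _ => 0)
      (by simp [d, hsum]; linarith)
    refine ⟨v, hv, ?_⟩
    rw [herase v hv]
    constructor <;> linarith [h.1, h.2, hd v hv, hdv]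

end SimpleGraph

theorem Finset.exists_nodup_toFinset_eq_forall_take_of_exists_erase {α : Type*} [DecidableEq α]
    {P : Finset α → Prop} (hP : ∀ s, s.Nonempty → P s → ∃ a ∈ s, P (s.erase a))
    {s : Finset α} (hs : P s) :
    ∃ l : List α, l.Nodup ∧ l.toFinset = s ∧ ∀ k, P (l.take k).toFinset := by
  induction s using Finset.strongInduction with
  | H s ih =>
    rcases s.eq_empty_or_nonempty with rfl | hne
    · exact ⟨[], List.nodup_nil, rfl, fun _ => by simpa using hs⟩
    obtain ⟨a, ha, hPa⟩ := hP s hne hs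
    obtain ⟨l, hl, hls, hlP⟩ := ih (s.erase a) (erase_ssubset ha) hPa
    have hal : a ∉ l := by simp [← List.mem_toFinset, hls]
    have hlas : (l ++ [a]).toFinset = s := by simp [hls, insert_erase ha]
    refine ⟨l ++ [a], hl.append (List.nodup_singleton a) (List.disjoint_singleton.mpr hal), hlas,
      fun k => ?_⟩
    rcases le_or_gt k l.length with hk | hk
    · rw [List.take_append_of_le_length hk]
      exact hlP k
    · rwa [List.take_of_length_le (by simpa using hk), hlas]

theorem List.Nodup.exists_equiv_image_filter_lt {α : Type*} [DecidableEq α] {n : ℕ}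
    {l : List α} (hl : l.Nodup) (h : ∀ a, a ∈ l) (hn : l.length = n) :
    ∃ e : Fin n ≃ α,
      ∀ k, (univ.filter fun i : Fin n => (i : ℕ) < k).image e = (l.take k).toFinset := by
  subst hn
  refine ⟨List.Nodup.getEquivOfForallMemList l hl h, fun k => ?_⟩
  ext a
  simp only [mem_image, mem_filter_univ, List.mem_toFinset, List.mem_take_iff_getElem, lt_min_iff,
    List.Nodup.getEquivOfForallMemList_apply, List.get_eq_getElem]
  constructor
  · rintro ⟨i, hi, rfl⟩
    exact ⟨i, ⟨hi, i.isLt⟩, rfl⟩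
  · rintro ⟨i, ⟨hi, hil⟩, rfl⟩
    exact ⟨⟨i, hil⟩, hi, rfl⟩

/-- For a graph with `n` vertices and edge density `p = e(G)/C(n,2)` there is an ordering
of the vertices with `|e({v_1,…,v_ℓ}) − p·C(ℓ,2)| ≤ max{p, 1−p}·(n−1)` for all `ℓ`. -/
theorem stmt_6 (n : ℕ) (G : SimpleGraph (Fin n)) [DecidableRel G.Adj]
    (p : ℝ) (hp : p = (G.edgeFinset.card : ℝ) / (n.choose 2)) :
    ∃ σ : Equiv.Perm (Fin n), ∀ ℓ : ℕ, 1 ≤ ℓ → ℓ ≤ n →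
      |((G.edgeFinset ∩ ((Finset.univ.filter (fun i : Fin n => (i : ℕ) < ℓ)).image σ).sym2).card : ℝ)
          - p * (ℓ.choose 2)| ≤ max p (1 - p) * ((n : ℝ) - 1) := by
  rcases Nat.eq_zero_or_pos n with rfl | hn
  · exact ⟨1, fun ℓ h₁ h₂ => absurd (h₁.trans h₂) (by omega)⟩
  replace hp : p = #G.edgeFinset / (Fintype.card (Fin n)).choose 2 := by rwa [Fintype.card_fin]
  obtain ⟨hp₀, hp₁⟩ := hp ▸ G.edgeDensity_mem_Icc
  have hc : (0 : ℝ) ≤ n - 1 := by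
    rw [sub_nonneg]
    exact_mod_cast hn
  obtain ⟨l, hl, hlu, hlP⟩ := exists_nodup_toFinset_eq_forall_take_of_exists_erase
    (P := fun s => G.edgeDiscrepancy p s ∈ Set.Icc (-((1 - p) * (n - 1))) (p * (n - 1)))
    (fun s hs hPs => SimpleGraph.exists_edgeDiscrepancy_erase_mem_Icc hp₀ hp₁ hs
      (sub_le_sub_right (by exact_mod_cast (card_le_univ s).trans_eq (Fintype.card_fin n)) 1) hPs)
    (s := univ) (by
      rw [Set.mem_Icc, hp, SimpleGraph.edgeDiscrepancy_univ_edgeDensity]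
      constructor <;> nlinarith)
  obtain ⟨σ, hσ⟩ := hl.exists_equiv_image_filter_lt
    (fun a => by simp [← List.mem_toFinset, hlu])
    (by rw [← List.toFinset_card_of_nodup hl, hlu, card_univ, Fintype.card_fin])
  refine ⟨σ, fun ℓ _ hℓn => ?_⟩
  have hcard : #((univ.filter fun i : Fin n => (i : ℕ) < ℓ).image σ) = ℓ := by
    rw [card_image_of_injective _ σ.injective, Fin.card_filter_val_lt, min_eq_right hℓn]
  have hP := hlP ℓ
  rw [← hσ ℓ, Set.mem_Icc, SimpleGraph.edgeDiscrepancy, SimpleGraph.inducedEdgeFinset,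
    hcard] at hP
  rw [abs_le]
  constructor <;> nlinarith [le_max_left p (1 - p), le_max_right p (1 - p)]
end

section
/- Let H be a k-uniform hypergraph on m ≥ k vertices with e(H) = p·C(m,k) − D, D ≥ 0, p a real number. If v is a vertex of degree at most the average degree k·e(H)/m, then p·C(m−1,k) − e(H − v) ≤ ((m−k)/m)·D, where H − v is the hypergraph induced on the remaining m−1 vertices. -/
/-- If `e(H) = p·C(m,k) − D`, `D ≥ 0`, and `v` has degree at most the average degree `k·e(H)/m`,
then `p·C(m−1,k) − e(H − v) ≤ ((m−k)/m)·D`. -/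
theorem stmt_8 (k m : ℕ) (hk2 : 2 ≤ k) (hm : k ≤ m) (H : Finset (Finset (Fin m)))
    (hk : ∀ e ∈ H, e.card = k) (p D : ℝ) (hD : 0 ≤ D)
    (hE : (H.card : ℝ) = p * (m.choose k) - D)
    (v : Fin m) (hv : ((H.filter (fun e => v ∈ e)).card : ℝ) ≤ (k : ℝ) * (H.card : ℝ) / m) :
    p * ((m - 1).choose k) - ((H.filter (fun e => v ∉ e)).card : ℝ)
      ≤ (((m : ℝ) - k) / m) * D := by
  have hm0 : (0:ℝ) < m := by
    have : 0 < m := by omega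
    exact_mod_cast this
  have hsplit : (H.filter (fun e => v ∈ e)).card + (H.filter (fun e => v ∉ e)).card = H.card :=
    Finset.card_filter_add_card_filter_not (fun e => v ∈ e)
  have hnat : m * ((m-1).choose k) = m.choose k * (m - k) := by
    obtain ⟨n, rfl⟩ : ∃ n, m = n + 1 := ⟨m - 1, by omega⟩
    simp only [Nat.add_sub_cancel]
    rw [Nat.add_one_mul_choose_eq, Nat.choose_succ_right_eq]
  have hid : (m:ℝ) * ((m-1).choose k) = (m.choose k : ℝ) * ((m:ℝ) - k) := by
    have := congrArg (Nat.cast : ℕ → ℝ) hnat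
    push_cast [Nat.cast_sub hm] at this
    linarith
  have hsplitR : ((H.filter (fun e => v ∈ e)).card : ℝ)
      + ((H.filter (fun e => v ∉ e)).card : ℝ) = (H.card : ℝ) := by
    exact_mod_cast hsplit
  have ha : ((H.filter (fun e => v ∈ e)).card : ℝ) * m ≤ (k:ℝ) * H.card :=
    (le_div_iff₀ hm0).mp hv
  rw [div_mul_eq_mul_div, le_div_iff₀ hm0]
  have h1 : p * (((m-1).choose k : ℝ)) * m = p * ((m.choose k : ℝ)) * ((m:ℝ) - k) := by
    rw [mul_assoc, mul_comm (((m-1).choose k : ℝ)) (m:ℝ), hid]; ring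
  have h2 : ((m:ℝ)-k) * (H.card:ℝ) = p * ((m.choose k:ℝ)) * ((m:ℝ)-k) - ((m:ℝ)-k)*D := by
    rw [hE]; ring
  nlinarith [ha, hsplitR, h1, h2, mul_le_mul_of_nonneg_right ha (le_of_lt hm0)]
end

section
/- Let H be a k-uniform hypergraph on m ≥ k vertices with e(H) = p·C(m,k) + D, D ≥ 0, p real. If v is a vertex of degree at least the average degree k·e(H)/m, then e(H − v) − p·C(m−1,k) ≤ ((m−k)/m)·D. -/
/-- If `e(H) = p·C(m,k) + D`, `D ≥ 0`, and `v` has degree at least the average degree `k·e(H)/m`,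
then `e(H − v) − p·C(m−1,k) ≤ ((m−k)/m)·D`. -/
theorem stmt_9 (k m : ℕ) (hk2 : 2 ≤ k) (hm : k ≤ m) (H : Finset (Finset (Fin m)))
    (hk : ∀ e ∈ H, e.card = k) (p D : ℝ) (hD : 0 ≤ D)
    (hE : (H.card : ℝ) = p * (m.choose k) + D)
    (v : Fin m) (hv : (k : ℝ) * (H.card : ℝ) / m ≤ ((H.filter (fun e => v ∈ e)).card : ℝ)) :
    ((H.filter (fun e => v ∉ e)).card : ℝ) - p * ((m - 1).choose k)
      ≤ (((m : ℝ) - k) / m) * D := by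
  have hm0 : (0:ℝ) < m := by
    have : 0 < m := by omega
    exact_mod_cast this
  -- split cardinalities
  have hA : ((H.filter (fun e => v ∈ e)).card : ℝ) + ((H.filter (fun e => v ∉ e)).card : ℝ)
      = (H.card : ℝ) := by
    have := Finset.card_filter_add_card_filter_not (s := H)
      (p := fun e => v ∈ e)
    exact_mod_cast this
  -- choose identity
  have hchooseN : (m-1).choose k * m = m.choose k * (m - k) := by
    have h := Nat.choose_mul_succ_eq (m-1) k
    have hm1 : m - 1 + 1 = m := by omega
    rw [hm1] at h
    exact h
  have hchoose : (((m-1).choose k : ℝ)) * m = (m.choose k : ℝ) * ((m:ℝ) - k) := by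
    have : (((m-1).choose k * m : ℕ) : ℝ) = ((m.choose k * (m - k) : ℕ) : ℝ) := by
      exact_mod_cast congrArg (Nat.cast (R := ℝ)) hchooseN
    push_cast [Nat.cast_sub hm] at this
    linarith [this]
  have h2 : p * (((m-1).choose k : ℝ) * m) = p * ((m.choose k : ℝ) * ((m:ℝ) - k)) := by
    rw [hchoose]
  have hv' : (k:ℝ) * (H.card : ℝ) ≤ ((H.filter (fun e => v ∈ e)).card : ℝ) * m := by
    have := (div_le_iff₀ hm0).mp hv
    linarith
  rw [div_mul_eq_mul_div, le_div_iff₀ hm0]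
  have hEm : (H.card : ℝ) * m = (p * (m.choose k) + D) * m := by rw [hE]
  have hkE : (k:ℝ) * (H.card : ℝ) = (k:ℝ) * (p * (m.choose k) + D) := by rw [hE]
  nlinarith [hA, hEm, hkE, h2, hv']
end

section
/- For an integer k ≥ 2, let H be a k-uniform hypergraph with n vertices and p·C(n,k) edges, where p = e(H)/C(n,k). Then there is an ordering v_1, …, v_n of the vertices such that for every ℓ ∈ {1,…,n}, e({v_1,…,v_ℓ}) − p·C(ℓ,k) ≤ p·C(n−1,k−1) and p·C(ℓ,k) − e({v_1,…,v_ℓ}) ≤ (1−p)·C(n−1,k−1). -/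
/-!
Write `f(S) = e(S) - p·C(|S|, k)` and `D = C(n-1, k-1)`. The ordering is built from the end:
starting from the whole vertex set, where `f = 0`, delete one vertex at a time while keeping
`-(1-p)·D ≤ f ≤ p·D`. Deleting `v` from `S` with `|S| = m + 1` raises `f` by at most
`p·C(m, k-1)` and lowers it by at most `(1-p)·C(m, k-1)`, since at most `C(m, k-1)` edges of
`S` contain `v`. Double counting gives `∑_{v ∈ S} f(S - v) = (|S| - k)·f(S)`, so the average of
`f(S - v)` lies between `0` and `f(S)`; some `v` therefore moves `f` towards `0` or not at all,
and then the one-step bounds keep it inside the interval.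
-/

open Finset

lemma exists_mem_Icc_of_sum_eq_mul {ι : Type*} {s : Finset ι} (hs : s.Nonempty) {g : ι → ℝ}
    {a b c x : ℝ} (hcs : c ≤ #s) (hsum : ∑ i ∈ s, g i = c * x)
    (hx : x ∈ Set.Icc (-b) a) (hg : ∀ i ∈ s, x - b ≤ g i ∧ g i ≤ x + a) :
    ∃ i ∈ s, g i ∈ Set.Icc (-b) a := by
  have hconst : ∑ _i ∈ s, x = #s * x := by rw [sum_const, nsmul_eq_mul]
  rcases le_or_gt 0 x with hx0 | hx0
  · obtain ⟨i, hi, hgi⟩ := exists_le_of_sum_le hs (g := fun _ => x)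
      (by rw [hsum, hconst]; exact mul_le_mul_of_nonneg_right hcs hx0)
    exact ⟨i, hi, by linarith [(hg i hi).1, hx.1], hgi.trans hx.2⟩
  · obtain ⟨i, hi, hgi⟩ := exists_le_of_sum_le hs (f := fun _ => x)
      (by rw [hsum, hconst]; exact mul_le_mul_of_nonpos_right hcs hx0.le)
    exact ⟨i, hi, hx.1.trans hgi, by linarith [(hg i hi).2, hx.2]⟩

section Hypergraph

variable {α : Type*} [DecidableEq α] (H : Finset (Finset α))

def edgesIn (S : Finset α) : ℕ := #{A ∈ H | A ⊆ S}

variable {H}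

lemma edgesIn_mono {S T : Finset α} (h : S ⊆ T) : edgesIn H S ≤ edgesIn H T :=
  card_le_card (monotone_filter_right _ fun _ _ hA => hA.trans h)

lemma edgesIn_le_edgesIn_erase_add_choose {k : ℕ} (hk : ∀ A ∈ H, #A = k) {S : Finset α}
    {v : α} (hv : v ∈ S) : edgesIn H S ≤ edgesIn H (S.erase v) + (#S - 1).choose (k - 1) := by
  have hcover : {A ∈ H | A ⊆ S} ⊆
      {A ∈ H | A ⊆ S.erase v} ∪ ((S.erase v).powersetCard (k - 1)).image (insert v) := by
    intro A hA
    rw [mem_filter] at hA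
    by_cases hvA : v ∈ A
    · refine mem_union_right _ (mem_image.2 ⟨A.erase v, mem_powersetCard.2 ⟨?_, ?_⟩, ?_⟩)
      · exact erase_subset_erase v hA.2
      · rw [card_erase_of_mem hvA, hk A hA.1]
      · exact insert_erase hvA
    · exact mem_union_left _ (mem_filter.2 ⟨hA.1, subset_erase.2 ⟨hA.2, hvA⟩⟩)
  calc edgesIn H S
      ≤ #{A ∈ H | A ⊆ S.erase v} + #(((S.erase v).powersetCard (k - 1)).image (insert v)) :=
        (card_le_card hcover).trans (card_union_le _ _)
    _ ≤ edgesIn H (S.erase v) + (#S - 1).choose (k - 1) := by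
        grw [card_image_le, card_powersetCard, card_erase_of_mem hv]; rfl

lemma sum_edgesIn_erase {k : ℕ} (hk : ∀ A ∈ H, #A = k) (S : Finset α) :
    ∑ v ∈ S, edgesIn H (S.erase v) = edgesIn H S * (#S - k) := by
  have hout (v : α) : edgesIn H (S.erase v) = #{A ∈ {A ∈ H | A ⊆ S} | v ∉ A} := by
    rw [edgesIn, filter_filter]
    congr 1
    exact filter_congr fun A _ => subset_erase
  have hmissed : ∀ A ∈ {A ∈ H | A ⊆ S}, #{v ∈ S | v ∉ A} = #S - k := by
    intro A hA
    rw [mem_filter] at hA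
    rw [filter_notMem_eq_sdiff, card_sdiff_of_subset hA.2, hk A hA.1]
  simp_rw [hout]
  calc ∑ v ∈ S, #{A ∈ {A ∈ H | A ⊆ S} | v ∉ A}
      = ∑ A ∈ {A ∈ H | A ⊆ S}, #{v ∈ S | v ∉ A} :=
        sum_card_bipartiteAbove_eq_sum_card_bipartiteBelow _
    _ = edgesIn H S * (#S - k) := by rw [sum_congr rfl hmissed, sum_const, smul_eq_mul]; rfl

variable (H) (k : ℕ) (p : ℝ)

def discrepancy (S : Finset α) : ℝ := edgesIn H S - p * (#S).choose k

variable {H k p}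

lemma sum_discrepancy_erase (hk : ∀ A ∈ H, #A = k) (S : Finset α) :
    ∑ v ∈ S, discrepancy H k p (S.erase v) = ((#S - k : ℕ) : ℝ) * discrepancy H k p S := by
  rcases S.eq_empty_or_nonempty with rfl | hS
  · simp
  obtain ⟨m, hm⟩ : ∃ m, #S = m + 1 := ⟨#S - 1, by have := hS.card_pos; omega⟩
  have hchoose : (m.choose k : ℝ) * #S = (#S).choose k * ((#S - k : ℕ) : ℝ) := by
    rw [hm]; exact_mod_cast Nat.choose_mul_succ_eq m k
  have hedges :
      ∑ v ∈ S, (edgesIn H (S.erase v) : ℝ) = edgesIn H S * ((#S - k : ℕ) : ℝ) := by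
    exact_mod_cast sum_edgesIn_erase hk S
  calc ∑ v ∈ S, discrepancy H k p (S.erase v)
      = ∑ v ∈ S, ((edgesIn H (S.erase v) : ℝ) - p * m.choose k) :=
        sum_congr rfl fun v hv => by rw [discrepancy, card_erase_of_mem hv, hm, Nat.add_sub_cancel]
    _ = ((#S - k : ℕ) : ℝ) * discrepancy H k p S := by
        rw [sum_sub_distrib, hedges, sum_const, nsmul_eq_mul, discrepancy]
        linear_combination (-p) * hchoose

lemma exists_discrepancy_erase_mem_Icc (hk1 : 1 ≤ k) (hk : ∀ A ∈ H, #A = k) (hp0 : 0 ≤ p)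
    (hp1 : p ≤ 1) {D : ℕ} {S : Finset α} (hS : S.Nonempty) (hD : (#S - 1).choose (k - 1) ≤ D)
    (hdisc : discrepancy H k p S ∈ Set.Icc (-((1 - p) * D)) (p * D)) :
    ∃ v ∈ S, discrepancy H k p (S.erase v) ∈ Set.Icc (-((1 - p) * D)) (p * D) := by
  obtain ⟨m, hm⟩ : ∃ m, #S = m + 1 := ⟨#S - 1, by have := hS.card_pos; omega⟩
  have hpascal : ((#S).choose k : ℝ) = m.choose k + m.choose (k - 1) := by
    rw [hm, Nat.choose_succ_left m k hk1, add_comm]; push_cast; ring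
  have hmD : (m.choose (k - 1) : ℝ) ≤ D := by
    rw [hm, Nat.add_sub_cancel] at hD; exact_mod_cast hD
  refine exists_mem_Icc_of_sum_eq_mul hS ?_ (sum_discrepancy_erase hk S) hdisc fun v hv => ?_
  · exact_mod_cast Nat.sub_le _ _
  have hlower : (edgesIn H S : ℝ) ≤ edgesIn H (S.erase v) + m.choose (k - 1) := by
    have := edgesIn_le_edgesIn_erase_add_choose hk hv
    rw [hm, Nat.add_sub_cancel] at this
    exact_mod_cast this
  have hupper : (edgesIn H (S.erase v) : ℝ) ≤ edgesIn H S := by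
    exact_mod_cast edgesIn_mono (erase_subset v S)
  rw [discrepancy, discrepancy, card_erase_of_mem hv, hm, Nat.add_sub_cancel, ← hm, hpascal]
  constructor
  · linarith [mul_le_mul_of_nonneg_left hmD (sub_nonneg.2 hp1)]
  · linarith [mul_le_mul_of_nonneg_left hmD hp0]

lemma exists_list_discrepancy_take_mem_Icc (hk1 : 1 ≤ k) (hk : ∀ A ∈ H, #A = k)
    (hp0 : 0 ≤ p) (hp1 : p ≤ 1) {D : ℕ} (S : Finset α) (hD : (#S - 1).choose (k - 1) ≤ D)
    (hdisc : discrepancy H k p S ∈ Set.Icc (-((1 - p) * D)) (p * D)) :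
    ∃ L : List α, L.Nodup ∧ L.toFinset = S ∧
      ∀ ℓ, discrepancy H k p (L.take ℓ).toFinset ∈ Set.Icc (-((1 - p) * D)) (p * D) := by
  induction S using Finset.strongInduction with
  | H S ih =>
  rcases S.eq_empty_or_nonempty with rfl | hS
  · exact ⟨[], List.nodup_nil, rfl, fun ℓ => by simpa using hdisc⟩
  obtain ⟨v, hv, hdisc'⟩ := exists_discrepancy_erase_mem_Icc hk1 hk hp0 hp1 hS hD hdisc
  have hD' : (#(S.erase v) - 1).choose (k - 1) ≤ D :=
    (Nat.choose_le_choose _ (by rw [card_erase_of_mem hv]; omega)).trans hD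
  obtain ⟨L, hnodup, hL, htake⟩ := ih _ (erase_ssubset hv) hD' hdisc'
  have hvL : v ∉ L := fun h => by simpa [hL] using List.mem_toFinset.2 h
  have hL_append : (L ++ [v]).toFinset = S := by
    rw [List.toFinset_append, hL]; simp [insert_erase hv]
  refine ⟨L ++ [v], ?_, hL_append, fun ℓ => ?_⟩
  · exact hnodup.append (List.nodup_singleton v) (List.disjoint_singleton.2 hvL)
  · rcases le_or_gt ℓ L.length with hℓ | hℓ
    · rw [List.take_append_of_le_length hℓ]; exact htake ℓ
    · rw [List.take_of_length_le (by simpa using hℓ)]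
      rwa [hL_append]

end Hypergraph

lemma exists_perm_image_filter_lt_eq_toFinset_take {n : ℕ} {L : List (Fin n)} (hnodup : L.Nodup)
    (hL : L.toFinset = univ) :
    ∃ σ : Equiv.Perm (Fin n),
      ∀ ℓ, (univ.filter fun i : Fin n => (i : ℕ) < ℓ).image σ = (L.take ℓ).toFinset := by
  have hlen : L.length = n := by
    rw [← List.toFinset_card_of_nodup hnodup, hL, card_univ, Fintype.card_fin]
  have hmem (x : Fin n) : x ∈ L := List.mem_toFinset.1 (hL ▸ mem_univ x)
  refine ⟨(finCongr hlen.symm).trans (hnodup.getEquivOfForallMemList L hmem), fun ℓ => ?_⟩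
  ext x
  simp only [Equiv.coe_trans, mem_image, mem_filter, mem_univ, true_and, Function.comp_apply,
    finCongr_apply, List.Nodup.getEquivOfForallMemList_apply, List.get_eq_getElem, Fin.val_cast,
    List.mem_toFinset, List.mem_take_iff_getElem, lt_inf_iff]
  constructor
  · rintro ⟨i, hi, rfl⟩
    exact ⟨i, ⟨hi, hlen.symm ▸ i.isLt⟩, rfl⟩
  · rintro ⟨j, ⟨hjℓ, hjL⟩, rfl⟩
    exact ⟨⟨j, hlen ▸ hjL⟩, hjℓ, rfl⟩

lemma card_le_choose_of_forall_card_eq {α : Type*} [Fintype α] {H : Finset (Finset α)} {k : ℕ}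
    (hk : ∀ A ∈ H, #A = k) : #H ≤ (Fintype.card α).choose k := by
  rw [← card_univ, ← card_powersetCard]
  exact card_le_card fun A hA => mem_powersetCard_univ.2 (hk A hA)

/-- For a `k`-uniform hypergraph with `n` vertices and `p·C(n,k)` edges there is an ordering
whose every prefix satisfies `e − p·C(ℓ,k) ≤ p·C(n−1,k−1)` and
`p·C(ℓ,k) − e ≤ (1−p)·C(n−1,k−1)`. -/
theorem stmt_10 (k n : ℕ) (hk2 : 2 ≤ k) (H : Finset (Finset (Fin n)))
    (hk : ∀ e ∈ H, e.card = k) (p : ℝ)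
    (hE : (H.card : ℝ) = p * (n.choose k)) :
    ∃ σ : Equiv.Perm (Fin n), ∀ ℓ : ℕ, 1 ≤ ℓ → ℓ ≤ n →
      (((H.filter (fun e => e ⊆ (Finset.univ.filter (fun i : Fin n => (i : ℕ) < ℓ)).image σ)).card : ℝ)
          - p * (ℓ.choose k) ≤ p * ((n - 1).choose (k - 1))) ∧
      (p * (ℓ.choose k)
          - ((H.filter (fun e => e ⊆ (Finset.univ.filter (fun i : Fin n => (i : ℕ) < ℓ)).image σ)).card : ℝ)
          ≤ (1 - p) * ((n - 1).choose (k - 1))) := by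
  rcases lt_or_ge n k with hnk | hkn
  · have hH : (#H : ℝ) = 0 := by rw [hE, Nat.choose_eq_zero_of_lt hnk, Nat.cast_zero, mul_zero]
    refine ⟨1, fun ℓ _ hℓn => ?_⟩
    simp [card_eq_zero.1 (Nat.cast_eq_zero.1 hH), Nat.choose_eq_zero_of_lt (hℓn.trans_lt hnk),
      Nat.choose_eq_zero_of_lt (show n - 1 < k - 1 by omega)]
  have hpos : (0 : ℝ) < n.choose k := by exact_mod_cast Nat.choose_pos hkn
  have hp0 : 0 ≤ p := nonneg_of_mul_nonneg_left (hE ▸ (#H).cast_nonneg) hpos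
  have hp1 : p ≤ 1 := by
    have hcard : (#H : ℝ) ≤ n.choose k := by
      exact_mod_cast (card_le_choose_of_forall_card_eq hk).trans_eq (by rw [Fintype.card_fin])
    exact (mul_le_iff_le_one_left hpos).1 (hE ▸ hcard)
  have hdisc_univ : discrepancy H k p univ = 0 := by
    simp [discrepancy, edgesIn, hE]
  obtain ⟨L, hnodup, hL, hgood⟩ := exists_list_discrepancy_take_mem_Icc (by omega) hk hp0 hp1
    (D := (n - 1).choose (k - 1)) univ (by simp)
    (by rw [hdisc_univ]
        exact ⟨neg_nonpos.2 (mul_nonneg (sub_nonneg.2 hp1) (Nat.cast_nonneg _)),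
          mul_nonneg hp0 (Nat.cast_nonneg _)⟩)
  obtain ⟨σ, hσ⟩ := exists_perm_image_filter_lt_eq_toFinset_take hnodup hL
  refine ⟨σ, fun ℓ _ hℓn => ?_⟩
  have hcard : #((univ.filter fun i : Fin n => (i : ℕ) < ℓ).image σ) = ℓ := by
    rw [card_image_of_injective _ σ.injective, Fin.card_filter_val_lt, min_eq_right hℓn]
  have h := hgood ℓ
  rw [← hσ, discrepancy, edgesIn, hcard] at h
  exact ⟨by linarith [h.2], by linarith [h.1]⟩
end
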